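/- Let a ≤ b be naturals, set L = b − a + 1, and let M be the family of dyadic intervals contained in [a, b] that are maximal under set inclusion among all dyadic intervals contained in [a, b]. Then for each natural k, at most two members of M have cardinality 2^k; every member of M has cardinality at most 2^{⌊log₂ L⌋}; and consequently |M| ≤ 2·(⌊log₂ L⌋ + 1). -/

import Mathlib

/-!
If `D(c₁, k)` and `D(c₃, k)` lie in `[a, b]` and `c₁ < c₂ < c₃`, then the parent `D(c₂ / 2, k + 1)`
of `D(c₂, k)` lies between them and hence in `[a, b]`, so `D(c₂, k)` is not maximal. The indices
of the maximal dyadic intervals of size `2^k` therefore have no middle element, so there are at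
most two of them; and the size `2^k` of a dyadic interval inside `[a, b]` is at most `L`, so only
the levels `k ≤ ⌊log₂ L⌋` occur.
-/

/-- The dyadic interval `D(c, k) = {c·2^k, c·2^k + 1, …, (c+1)·2^k − 1}`. -/
def dyadic (c k : ℕ) : Finset ℕ :=
  Finset.Ico (c * 2 ^ k) ((c + 1) * 2 ^ k)

open Finset

theorem Set.ncard_le_two_of_forall_not_lt_lt {α : Type*} [LinearOrder α] {S : Set α}
    (h : ∀ x ∈ S, ∀ y ∈ S, ∀ z ∈ S, ¬(x < y ∧ y < z)) : S.ncard ≤ 2 := by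
  by_contra! h₂
  obtain ⟨x, hx, y, hy, z, hz, hxy, hxz, hyz⟩ :=
    (Set.two_lt_ncard (Set.finite_of_ncard_pos (by omega))).1 h₂
  rcases hxy.lt_or_gt with hxy | hxy <;> rcases hxz.lt_or_gt with hxz | hxz <;>
    rcases hyz.lt_or_gt with hyz | hyz
  all_goals grind

theorem card_dyadic (c k : ℕ) : #(dyadic c k) = 2 ^ k := by
  rw [dyadic, Nat.card_Ico, add_one_mul, Nat.add_sub_cancel_left]

theorem mul_two_pow_mem_dyadic (c k : ℕ) : c * 2 ^ k ∈ dyadic c k := by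
  rw [dyadic, mem_Ico, add_one_mul]
  exact ⟨le_rfl, Nat.lt_add_of_pos_right (Nat.two_pow_pos k)⟩

theorem dyadic_left_injective (k : ℕ) : Function.Injective (dyadic · k) := by
  intro c c' h
  have h₁ := mul_two_pow_mem_dyadic c k
  have h₂ := mul_two_pow_mem_dyadic c' k
  simp only at h
  rw [h, dyadic, mem_Ico] at h₁
  rw [← h, dyadic, mem_Ico] at h₂
  have := Nat.lt_of_mul_lt_mul_right h₁.2
  have := Nat.lt_of_mul_lt_mul_right h₂.2
  omega

theorem dyadic_subset_Icc_iff {c k a b : ℕ} :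
    dyadic c k ⊆ Icc a b ↔ a ≤ c * 2 ^ k ∧ (c + 1) * 2 ^ k ≤ b + 1 := by
  rw [dyadic, ← Ico_add_one_right_eq_Icc, Ico_subset_Ico_iff]
  exact Nat.mul_lt_mul_of_pos_right (Nat.lt_succ_self c) (Nat.two_pow_pos k)

theorem dyadic_subset_dyadic_div_two (c k : ℕ) : dyadic c k ⊆ dyadic (c / 2) (k + 1) := by
  refine Ico_subset_Ico ?_ ?_
  · calc c / 2 * 2 ^ (k + 1) = c / 2 * 2 * 2 ^ k := by ring
      _ ≤ c * 2 ^ k := Nat.mul_le_mul_right _ (Nat.div_mul_le_self c 2)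
  · calc (c + 1) * 2 ^ k ≤ (c / 2 * 2 + 2) * 2 ^ k := Nat.mul_le_mul_right _ (by omega)
      _ = (c / 2 + 1) * 2 ^ (k + 1) := by ring

theorem dyadic_div_two_subset_Icc {a b c₁ c₂ c₃ k : ℕ} (h₁ : dyadic c₁ k ⊆ Icc a b)
    (h₃ : dyadic c₃ k ⊆ Icc a b) (h₁₂ : c₁ < c₂) (h₂₃ : c₂ < c₃) :
    dyadic (c₂ / 2) (k + 1) ⊆ Icc a b := by
  rw [dyadic_subset_Icc_iff] at *
  constructor
  · calc a ≤ c₁ * 2 ^ k := h₁.1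
      _ ≤ c₂ / 2 * 2 * 2 ^ k := Nat.mul_le_mul_right _ (by omega)
      _ = c₂ / 2 * 2 ^ (k + 1) := by ring
  · calc (c₂ / 2 + 1) * 2 ^ (k + 1) = (c₂ / 2 * 2 + 2) * 2 ^ k := by ring
      _ ≤ (c₃ + 1) * 2 ^ k := Nat.mul_le_mul_right _ (by omega)
      _ ≤ b + 1 := h₃.2

def IsDyadic (D : Finset ℕ) : Prop := ∃ c k, D = dyadic c k

def maximalDyadic (s : Finset ℕ) : Set (Finset ℕ) :=
  {D | Maximal (fun D ↦ IsDyadic D ∧ D ⊆ s) D}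

section maximalDyadic

variable {s D : Finset ℕ}

theorem mem_maximalDyadic : D ∈ maximalDyadic s ↔ Maximal (fun D ↦ IsDyadic D ∧ D ⊆ s) D :=
  Iff.rfl

theorem maximalDyadic_finite (s : Finset ℕ) : (maximalDyadic s).Finite :=
  s.powerset.finite_toSet.subset fun _ hD ↦ mem_powerset.2 hD.1.2

theorem dyadic_div_two_not_subset {c k : ℕ} (h : dyadic c k ∈ maximalDyadic s) :
    ¬dyadic (c / 2) (k + 1) ⊆ s := fun hs ↦ by
  have h_eq := (mem_maximalDyadic.1 h).eq_of_ge ⟨⟨_, _, rfl⟩, hs⟩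
    (dyadic_subset_dyadic_div_two c k)
  have h_card := congrArg card h_eq
  rw [card_dyadic, card_dyadic] at h_card
  exact k.succ_ne_self (Nat.pow_right_injective le_rfl h_card)

theorem exists_card_eq_two_pow_le_log (hD : D ∈ maximalDyadic s) :
    ∃ k ≤ Nat.log 2 #s, #D = 2 ^ k := by
  obtain ⟨⟨c, k, rfl⟩, hs⟩ := hD.1
  exact ⟨k, Nat.le_log_of_pow_le one_lt_two (card_dyadic c k ▸ card_le_card hs), card_dyadic c k⟩

end maximalDyadic

theorem ncard_maximalDyadic_Icc_card_eq_le_two (a b k : ℕ) :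
    {D ∈ maximalDyadic (Icc a b) | #D = 2 ^ k}.ncard ≤ 2 := by
  have hlevel : {D ∈ maximalDyadic (Icc a b) | #D = 2 ^ k} =
      (dyadic · k) '' {c | dyadic c k ∈ maximalDyadic (Icc a b)} := by
    ext D
    constructor
    · rintro ⟨hD, hcard⟩
      obtain ⟨⟨c, k', rfl⟩, -⟩ := hD.1
      rw [card_dyadic, Nat.pow_right_injective le_rfl |>.eq_iff] at hcard
      exact ⟨c, hcard ▸ hD, by rw [hcard]⟩
    · rintro ⟨c, hc, rfl⟩
      exact ⟨hc, card_dyadic c k⟩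
  rw [hlevel, Set.ncard_image_of_injective _ (dyadic_left_injective k)]
  refine Set.ncard_le_two_of_forall_not_lt_lt fun c₁ h₁ c₂ h₂ c₃ h₃ ⟨h₁₂, h₂₃⟩ ↦ ?_
  exact dyadic_div_two_not_subset h₂ (dyadic_div_two_subset_Icc h₁.1.2 h₃.1.2 h₁₂ h₂₃)

theorem ncard_maximalDyadic_Icc_le (a b : ℕ) :
    (maximalDyadic (Icc a b)).ncard ≤ 2 * (Nat.log 2 #(Icc a b) + 1) := by
  set ℓ := Nat.log 2 #(Icc a b)
  have hlevels : maximalDyadic (Icc a b) =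
      ⋃ k ∈ range (ℓ + 1), {D ∈ maximalDyadic (Icc a b) | #D = 2 ^ k} := by
    ext D
    simp only [Set.mem_iUnion, Set.mem_ofPred_eq, mem_range, Nat.lt_succ_iff, exists_prop]
    refine ⟨fun hD ↦ ?_, fun ⟨_, _, hD, _⟩ ↦ hD⟩
    obtain ⟨k, hk, hcard⟩ := exists_card_eq_two_pow_le_log hD
    exact ⟨k, hk, hD, hcard⟩
  calc (maximalDyadic (Icc a b)).ncard
      = (⋃ k ∈ range (ℓ + 1), {D ∈ maximalDyadic (Icc a b) | #D = 2 ^ k}).ncard :=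
        congrArg _ hlevels
    _ ≤ ∑ k ∈ range (ℓ + 1), {D ∈ maximalDyadic (Icc a b) | #D = 2 ^ k}.ncard :=
        set_ncard_biUnion_le _ _
    _ ≤ ∑ _k ∈ range (ℓ + 1), 2 :=
        sum_le_sum fun k _ ↦ ncard_maximalDyadic_Icc_card_eq_le_two a b k
    _ = 2 * (ℓ + 1) := by rw [sum_const, card_range, smul_eq_mul, mul_comm]

/-- **Size of the canonical dyadic decomposition.** Let `M` be the family of maximal
dyadic intervals contained in `[a, b]` and `L = b − a + 1`. Then `M` is finite, at most
two members of `M` have cardinality `2^k` for each `k`, every member has cardinality at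
most `2^(⌊log₂ L⌋)`, and consequently `|M| ≤ 2 (⌊log₂ L⌋ + 1)`. -/
theorem maximal_dyadic_decomposition_card (a b : ℕ) (hab : a ≤ b)
    (L : ℕ) (hL : L = b - a + 1)
    (M : Set (Finset ℕ))
    (hM : M = {D | (∃ c k, D = dyadic c k) ∧ D ⊆ Finset.Icc a b ∧
      ∀ D' : Finset ℕ, (∃ c k, D' = dyadic c k) → D' ⊆ Finset.Icc a b →
        D ⊆ D' → D = D'}) :
    M.Finite ∧
    (∀ k : ℕ, {D ∈ M | D.card = 2 ^ k}.ncard ≤ 2) ∧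
    (∀ D ∈ M, D.card ≤ 2 ^ (Nat.log 2 L)) ∧
    M.ncard ≤ 2 * (Nat.log 2 L + 1) := by
  have hM' : M = maximalDyadic (Icc a b) := by
    simp only [hM, maximalDyadic, maximal_iff, IsDyadic, and_imp, and_assoc]
  have hL' : L = #(Icc a b) := by rw [Nat.card_Icc]; omega
  subst hM' hL'
  refine ⟨maximalDyadic_finite _, ncard_maximalDyadic_Icc_card_eq_le_two a b,
    fun D hD ↦ ?_, ncard_maximalDyadic_Icc_le a b⟩
  obtain ⟨k, hk, hcard⟩ := exists_card_eq_two_pow_le_log hD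
  exact hcard ▸ Nat.pow_le_pow_right two_pos hk
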